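/- Let p ≥ 2, let x¹,…,xᵐ ∈ ℝⁿ and ω₁,…,ω_m > 0. Define v(P) = max over ‖x‖_p ≤ 1 of min_i ω_i‖x - xⁱ‖₂². Let α > 0 and ξ ∈ {-1,1}ⁿ satisfy (xⁱ)ᵀξ < α‖xⁱ‖₂ for every i with ‖xⁱ‖₂ > 0. Then x̃ = n^{-1/p}ξ satisfies min_i ω_i‖x̃ - xⁱ‖₂² ≥ ((1 - α n^{-1/2})/2) · v(P). -/

import Mathlib

/-!
Put `c = α n^{-1/2}` and `u = n^{-1/p} ξ`, so that `‖u‖₂² = n^{1-2/p}`. By the power-mean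
inequality (`p ≥ 2`) every feasible `z` has `‖z‖₂ ≤ ‖u‖₂`, hence
`‖z - xⁱ‖₂² ≤ 2 (‖u‖₂² + ‖xⁱ‖₂²)`. On the other hand `⟪u, xⁱ⟫ ≤ c ‖u‖₂ ‖xⁱ‖₂`, so by AM-GM
`‖u - xⁱ‖₂² ≥ (1 - c) (‖u‖₂² + ‖xⁱ‖₂²)`. Comparing the two bounds index by index gives the claim
when `c ≤ 1`; when `c > 1` its left-hand side is nonpositive.
-/

open Finset Real

/-- The ℓ_p norm of a vector in ℝⁿ, for real p. -/
noncomputable def pNorm (n : ℕ) (p : ℝ) (x : Fin n → ℝ) : ℝ :=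
  (∑ i, |x i| ^ p) ^ (1 / p)

open scoped InnerProductSpace

section InnerProductSpace

variable {E : Type*} [NormedAddCommGroup E] [InnerProductSpace ℝ E]

theorem one_sub_mul_norm_sq_add_le_norm_sub_sq {u y : E} {c : ℝ} (hc : 0 ≤ c)
    (h : ⟪u, y⟫_ℝ ≤ c * (‖u‖ * ‖y‖)) : (1 - c) * (‖u‖ ^ 2 + ‖y‖ ^ 2) ≤ ‖u - y‖ ^ 2 := by
  rw [norm_sub_sq_real]
  nlinarith [two_mul_le_add_sq ‖u‖ ‖y‖]

theorem mul_norm_sub_sq_le_of_norm_le {u y z : E} {c : ℝ} (hc : 0 ≤ c) (hc1 : c ≤ 1)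
    (h : ⟪u, y⟫_ℝ ≤ c * (‖u‖ * ‖y‖)) (hz : ‖z‖ ≤ ‖u‖) :
    (1 - c) / 2 * ‖z - y‖ ^ 2 ≤ ‖u - y‖ ^ 2 := by
  have hzy : ‖z - y‖ ^ 2 ≤ 2 * (‖u‖ ^ 2 + ‖y‖ ^ 2) := by
    nlinarith [norm_sub_le z y, norm_nonneg z, norm_nonneg (z - y), norm_nonneg y,
      sq_nonneg (‖z‖ - ‖y‖)]
  calc (1 - c) / 2 * ‖z - y‖ ^ 2 ≤ (1 - c) * (‖u‖ ^ 2 + ‖y‖ ^ 2) := by nlinarith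
    _ ≤ ‖u - y‖ ^ 2 := one_sub_mul_norm_sq_add_le_norm_sub_sq hc h

theorem inner_le_mul_norm_of_pos {u y : E} {a : ℝ} (h : 0 < ‖y‖ → ⟪u, y⟫_ℝ < a * ‖y‖) :
    ⟪u, y⟫_ℝ ≤ a * ‖y‖ := by
  rcases (norm_nonneg y).eq_or_lt with hy | hy
  · simp [norm_eq_zero.1 hy.symm]
  · exact (h hy).le

end InnerProductSpace

theorem sum_sq_le_of_pNorm_le_one {n : ℕ} {p : ℝ} (hp : 2 ≤ p) {z : Fin n → ℝ}
    (hz : pNorm n p z ≤ 1) : ∑ j, z j ^ 2 ≤ (n : ℝ) ^ (1 - 2 / p) := by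
  have hp0 : 0 < p := by linarith
  have hsum : ∑ j, |z j| ^ p ≤ 1 :=
    not_lt.1 fun h => (one_lt_rpow h (by positivity)).not_ge hz
  have hpow : (∑ j, z j ^ 2) ^ (p / 2) ≤ (n : ℝ) ^ (p / 2 - 1) := by
    have := rpow_sum_le_const_mul_sum_rpow_of_nonneg univ (f := fun j => z j ^ 2)
      (by linarith : 1 ≤ p / 2) (fun j _ => sq_nonneg (z j))
    simp only [card_univ, Fintype.card_fin] at this
    refine this.trans (mul_le_of_le_one_right (by positivity) ?_)
    refine le_of_eq_of_le (sum_congr rfl fun j _ => ?_) hsum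
    rw [← sq_abs, ← rpow_natCast, ← rpow_mul (abs_nonneg _)]
    norm_num
    field_simp
  calc ∑ j, z j ^ 2 = ((∑ j, z j ^ 2) ^ (p / 2)) ^ (2 / p) := by
        rw [← rpow_mul (by positivity), mul_div_assoc', div_mul_cancel₀ _ (by positivity),
          div_self hp0.ne', rpow_one]
    _ ≤ ((n : ℝ) ^ (p / 2 - 1)) ^ (2 / p) := by gcongr
    _ = (n : ℝ) ^ (1 - 2 / p) := by
        rw [← rpow_mul (Nat.cast_nonneg n)]
        congr 1
        field_simp

section EuclideanSpace

open WithLp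

variable {n : ℕ}

theorem norm_toLp_eq_sqrt_sum_sq (f : Fin n → ℝ) :
    ‖(toLp 2 f : EuclideanSpace ℝ (Fin n))‖ = √(∑ j, f j ^ 2) := by
  simp [EuclideanSpace.norm_eq]

theorem inner_toLp_eq_sum_mul (f g : Fin n → ℝ) :
    ⟪(toLp 2 f : EuclideanSpace ℝ (Fin n)), toLp 2 g⟫_ℝ = ∑ j, g j * f j := by
  simp [EuclideanSpace.inner_toLp_toLp, dotProduct]

theorem sum_sq_eq_of_sign {ξ : Fin n → ℝ} (hξ : ∀ j, ξ j = 1 ∨ ξ j = -1) :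
    ∑ j, ξ j ^ 2 = n := by
  have : ∀ j, ξ j ^ 2 = 1 := fun j => by rcases hξ j with h | h <;> simp [h]
  simp [this]

theorem mul_sum_sub_sq_le_sum_sign_sub_sq {p α : ℝ} (hn : 0 < n) (hp : 2 ≤ p) (hα : 0 ≤ α)
    (hα1 : α * (n : ℝ) ^ (-(1 : ℝ) / 2) ≤ 1) {ξ y z : Fin n → ℝ}
    (hξ : ∀ j, ξ j = 1 ∨ ξ j = -1)
    (hy : 0 < √(∑ j, y j ^ 2) → ∑ j, y j * ξ j < α * √(∑ j, y j ^ 2))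
    (hz : pNorm n p z ≤ 1) :
    (1 - α * (n : ℝ) ^ (-(1 : ℝ) / 2)) / 2 * ∑ j, (z j - y j) ^ 2
      ≤ ∑ j, ((n : ℝ) ^ (-(1 / p)) * ξ j - y j) ^ 2 := by
  have hN : (0 : ℝ) < n := Nat.cast_pos.2 hn
  set t := (n : ℝ) ^ (-(1 / p))
  have ht : 0 < t := rpow_pos_of_pos hN _
  let U : EuclideanSpace ℝ (Fin n) := toLp 2 fun j => t * ξ j
  let Y : EuclideanSpace ℝ (Fin n) := toLp 2 y
  let Z : EuclideanSpace ℝ (Fin n) := toLp 2 z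
  have hU : ‖U‖ = t * √n := by
    simp only [U, norm_toLp_eq_sqrt_sum_sq, mul_pow, ← mul_sum, sum_sq_eq_of_sign hξ,
      sqrt_mul (sq_nonneg t), sqrt_sq ht.le]
  have hUY : ⟪U, Y⟫_ℝ ≤ α * (n : ℝ) ^ (-(1 : ℝ) / 2) * (‖U‖ * ‖Y‖) := by
    rw [← inner_toLp_eq_sum_mul ξ y, ← norm_toLp_eq_sqrt_sum_sq y] at hy
    have hY : ⟪U, Y⟫_ℝ = t * ⟪(toLp 2 ξ : EuclideanSpace ℝ (Fin n)), Y⟫_ℝ := by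
      simp only [U, Y, inner_toLp_eq_sum_mul, mul_sum, mul_left_comm]
    calc ⟪U, Y⟫_ℝ ≤ t * (α * ‖Y‖) := by
          rw [hY]
          exact mul_le_mul_of_nonneg_left (inner_le_mul_norm_of_pos hy) ht.le
      _ = α * (n : ℝ) ^ (-(1 : ℝ) / 2) * (‖U‖ * ‖Y‖) := by
          rw [hU, neg_div, rpow_neg hN.le, ← sqrt_eq_rpow]
          field_simp
  have hZU : ‖Z‖ ≤ ‖U‖ := by
    refine (pow_le_pow_iff_left₀ (norm_nonneg _) (norm_nonneg _) two_ne_zero).1 ?_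
    calc ‖Z‖ ^ 2 = ∑ j, z j ^ 2 := EuclideanSpace.real_norm_sq_eq _
      _ ≤ (n : ℝ) ^ (1 - 2 / p) := sum_sq_le_of_pNorm_le_one hp hz
      _ = ‖U‖ ^ 2 := by
          rw [hU, mul_pow, sq_sqrt hN.le, ← rpow_mul_natCast hN.le, ← rpow_add_one hN.ne']
          ring_nf
  have key := mul_norm_sub_sq_le_of_norm_le (by positivity) hα1 hUY hZU
  simpa only [U, Y, Z, ← toLp_sub, EuclideanSpace.real_norm_sq_eq, Pi.sub_apply] using key

end EuclideanSpace

/-- Deterministic core of the approximation bound: if ξ is a sign vector with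
    (xⁱ)ᵀξ < α‖xⁱ‖₂ for each i with xⁱ ≠ 0, then x̃ = n^{-1/p}ξ satisfies
    min_i ω_i‖x̃ - xⁱ‖₂² ≥ ((1 - α n^{-1/2})/2)·v(P). -/
theorem maximin_dispersion_approx (n m : ℕ) (hn : 1 ≤ n) (hm : 1 ≤ m)
    (p : ℝ) (hp : 2 ≤ p) (x : Fin m → Fin n → ℝ) (w : Fin m → ℝ) (hw : ∀ i, 0 < w i)
    (vP : ℝ)
    (hvP : IsGreatest {v : ℝ | ∃ z : Fin n → ℝ, pNorm n p z ≤ 1 ∧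
        v = ⨅ i : Fin m, w i * ∑ j, (z j - x i j) ^ 2} vP)
    (α : ℝ) (hα : 0 < α) (ξ : Fin n → ℝ) (hξ : ∀ j, ξ j = 1 ∨ ξ j = -1)
    (hdot : ∀ i, 0 < Real.sqrt (∑ j, (x i j) ^ 2) →
        ∑ j, x i j * ξ j < α * Real.sqrt (∑ j, (x i j) ^ 2)) :
    (1 - α * (n : ℝ) ^ (-(1 : ℝ) / 2)) / 2 * vP
      ≤ ⨅ i : Fin m, w i * ∑ j, ((n : ℝ) ^ (-(1 / p)) * ξ j - x i j) ^ 2 := by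
  have : Nonempty (Fin m) := ⟨⟨0, hm⟩⟩
  obtain ⟨z, hz, rfl⟩ := hvP.1
  set c := α * (n : ℝ) ^ (-(1 : ℝ) / 2)
  rcases le_or_gt c 1 with hc | hc
  · refine le_ciInf fun i => ?_
    calc (1 - c) / 2 * ⨅ k, w k * ∑ j, (z j - x k j) ^ 2
        ≤ (1 - c) / 2 * (w i * ∑ j, (z j - x i j) ^ 2) :=
          mul_le_mul_of_nonneg_left (ciInf_le (Set.finite_range _).bddBelow i) (by linarith)
      _ = w i * ((1 - c) / 2 * ∑ j, (z j - x i j) ^ 2) := by ring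
      _ ≤ w i * ∑ j, ((n : ℝ) ^ (-(1 / p)) * ξ j - x i j) ^ 2 :=
          mul_le_mul_of_nonneg_left
            (mul_sum_sub_sq_le_sum_sign_sub_sq hn hp hα.le hc hξ (hdot i) hz) (hw i).le
  · have hv0 : 0 ≤ ⨅ k, w k * ∑ j, (z j - x k j) ^ 2 :=
      le_ciInf fun k => mul_nonneg (hw k).le (by positivity)
    exact (mul_nonpos_of_nonpos_of_nonneg (by linarith) hv0).trans
      (le_ciInf fun k => mul_nonneg (hw k).le (by positivity))
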